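/- Let g be a 6-dimensional Lie algebra with (1,0)-basis ω¹,ω²,ω³ satisfying dω¹ = A ω¹∧(ω³+ω̄³), dω² = −A ω²∧(ω³+ω̄³), dω³ = G₁₁ ω¹∧ω̄¹ + G₁₂ ω¹∧ω̄² + conj(G₁₂) ω²∧ω̄¹ + G₂₂ ω²∧ω̄², where |A| = 1, and let F be the Hermitian 2-form 2F = i(r²ω¹∧ω̄¹ + s²ω²∧ω̄² + t²ω³∧ω̄³) + u ω¹∧ω̄² − ū ω²∧ω̄¹ + v ω²∧ω̄³ − v̄ ω³∧ω̄² + z ω¹∧ω̄³ − z̄ ω³∧ω̄¹. Then ∂∂̄F = i t²(G₁₁G₂₂ − |G₁₂|²) ω¹²∧ω̄¹² − 2i r² (Re A)² ω¹³∧ω̄¹³ − 2i s² (Re A)² ω²³∧ω̄²³ + 2u (Im A)² ω¹³∧ω̄²³ − 2ū (Im A)² ω²³∧ω̄¹³. -/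

import Mathlib

noncomputable section

/-- The space of invariant complex forms: the exterior algebra over the span of
`ω¹, ω², ω³, ω̄¹, ω̄², ω̄³` (indexed `0,…,5`). -/
abbrev Lambda : Type := ExteriorAlgebra ℂ (Fin 6 → ℂ)

/-- The generators `ω¹, ω², ω³, ω̄¹, ω̄², ω̄³` as degree-one elements. -/
def w (i : Fin 6) : Lambda := ExteriorAlgebra.ι ℂ (Pi.single i 1)

/-- Antiderivation property (Leibniz rule against `1`-forms): the defining extension
property of (the bigraded pieces of) the Chevalley–Eilenberg differential. -/
def IsAntideriv (D : Lambda →ₗ[ℂ] Lambda) : Prop :=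
  D 1 = 0 ∧ ∀ (v : Fin 6 → ℂ) (x : Lambda),
    D (ExteriorAlgebra.ι ℂ v * x) =
      D (ExteriorAlgebra.ι ℂ v) * x - ExteriorAlgebra.ι ℂ v * D x

/-- The generic Hermitian form
`2F = i(r²ω¹∧ω̄¹ + s²ω²∧ω̄² + t²ω³∧ω̄³) + uω¹∧ω̄² − ūω²∧ω̄¹ + vω²∧ω̄³ − v̄ω³∧ω̄²
  + zω¹∧ω̄³ − z̄ω³∧ω̄¹`. -/
def Fherm (r s t : ℝ) (u v z : ℂ) : Lambda :=
  (1 / 2 : ℂ) •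
    (Complex.I • ((r : ℂ) ^ 2 • (w 0 * w 3) + (s : ℂ) ^ 2 • (w 1 * w 4) +
        (t : ℂ) ^ 2 • (w 2 * w 5)) +
      u • (w 0 * w 4) - (starRingEnd ℂ) u • (w 1 * w 3) +
      v • (w 1 * w 5) - (starRingEnd ℂ) v • (w 2 * w 4) +
      z • (w 0 * w 5) - (starRingEnd ℂ) z • (w 2 * w 3))

/-- Positivity constraints making `Fherm r s t u v z` a Hermitian metric. -/
def HermPos (r s t : ℝ) (u v z : ℂ) : Prop :=
  r ≠ 0 ∧ s ≠ 0 ∧ t ≠ 0 ∧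
  r ^ 2 * s ^ 2 > Complex.normSq u ∧ s ^ 2 * t ^ 2 > Complex.normSq v ∧
  r ^ 2 * t ^ 2 > Complex.normSq z ∧
  r ^ 2 * s ^ 2 * t ^ 2 +
      2 * (Complex.I * (starRingEnd ℂ) u * (starRingEnd ℂ) v * z).re >
    t ^ 2 * Complex.normSq u + r ^ 2 * Complex.normSq v + s ^ 2 * Complex.normSq z

/-!
Both `∂` and `∂̄` are determined by their values on the generators, so `∂∂̄` of each of the nine
basic forms `ωⁱ∧ω̄ʲ` is a finite computation in the exterior algebra. Every coefficient that
comes out is `(A + Ā)²`, `(A - Ā)²`, `2(G₁₁G₂₂ - G₁₂Ḡ₁₂)`, or one of the products `(A + Ā)G₁₁`,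
`(A + Ā)G₂₂`, `(A - Ā)G₁₂`, `(A - Ā)Ḡ₁₂`. The Jacobi conditions kill the products, and
`(A + Ā)² = 4(Re A)²`, `(A - Ā)² = -4(Im A)²` turn the rest into the stated formula.
-/

open ComplexConjugate

theorem Complex.add_conj_sq (z : ℂ) : (z + conj z) ^ 2 = 4 * (z.re : ℂ) ^ 2 := by
  rw [Complex.add_conj]; push_cast; ring

theorem Complex.sub_conj_sq (z : ℂ) : (z - conj z) ^ 2 = -(4 * (z.im : ℂ) ^ 2) := by
  rw [Complex.sub_conj]; push_cast; linear_combination (4 * (z.im : ℂ) ^ 2) * Complex.I_sq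

lemma w_mul_self (i : Fin 6) : w i * w i = 0 := ExteriorAlgebra.ι_sq_zero _

lemma w_mul_w_comm (i j : Fin 6) : w i * w j = -(w j * w i) :=
  eq_neg_of_add_eq_zero_left (ExteriorAlgebra.ι_add_mul_swap _ _)

lemma w_mul_w_mul_self (i : Fin 6) (x : Lambda) : w i * (w i * x) = 0 := by
  rw [← mul_assoc, w_mul_self, zero_mul]

lemma w_mul_w_mul_comm (i j : Fin 6) (x : Lambda) : w i * (w j * x) = -(w j * (w i * x)) := by
  rw [← mul_assoc, w_mul_w_comm, neg_mul, mul_assoc]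

structure StructureEquations (A G11 G12 G22 : ℂ) (Dp Db : Lambda →ₗ[ℂ] Lambda) : Prop where
  isAntideriv_dp : IsAntideriv Dp
  isAntideriv_db : IsAntideriv Db
  dp_w0 : Dp (w 0) = A • (w 0 * w 2)
  dp_w1 : Dp (w 1) = -A • (w 1 * w 2)
  dp_w2 : Dp (w 2) = 0
  dp_w3 : Dp (w 3) = conj A • (w 3 * w 2)
  dp_w4 : Dp (w 4) = -conj A • (w 4 * w 2)
  dp_w5 : Dp (w 5) = G11 • (w 3 * w 0) + conj G12 • (w 3 * w 1) +
    G12 • (w 4 * w 0) + G22 • (w 4 * w 1)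
  db_w0 : Db (w 0) = A • (w 0 * w 5)
  db_w1 : Db (w 1) = -A • (w 1 * w 5)
  db_w2 : Db (w 2) = G11 • (w 0 * w 3) + G12 • (w 0 * w 4) +
    conj G12 • (w 1 * w 3) + G22 • (w 1 * w 4)
  db_w3 : Db (w 3) = conj A • (w 3 * w 5)
  db_w4 : Db (w 4) = -conj A • (w 4 * w 5)
  db_w5 : Db (w 5) = 0

namespace StructureEquations

variable {A G11 G12 G22 : ℂ} {Dp Db : Lambda →ₗ[ℂ] Lambda}

theorem dp_w_mul (h : StructureEquations A G11 G12 G22 Dp Db) (i : Fin 6) (x : Lambda) :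
    Dp (w i * x) = Dp (w i) * x - w i * Dp x :=
  h.isAntideriv_dp.2 _ x

theorem db_w_mul (h : StructureEquations A G11 G12 G22 Dp Db) (i : Fin 6) (x : Lambda) :
    Db (w i * x) = Db (w i) * x - w i * Db x :=
  h.isAntideriv_db.2 _ x

theorem dp_db_w0_w3 (h : StructureEquations A G11 G12 G22 Dp Db) :
    Dp (Db (w 0 * w 3)) = -((A + conj A) * G22) • (w 0 * w 1 * w 3 * w 4)
      - (A + conj A) ^ 2 • (w 0 * w 2 * w 3 * w 5) := by
  simp only [h.dp_w_mul, h.db_w_mul, h.dp_w0, h.dp_w3, h.dp_w5, h.db_w0, h.db_w3, map_sub, map_smul,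
    mul_assoc, add_mul, mul_add, mul_sub, smul_mul_assoc, mul_smul_comm]
  simp only [w_mul_w_mul_self, w_mul_self, w_mul_w_mul_comm 3 0, w_mul_w_mul_comm 4 0,
    w_mul_w_mul_comm 3 1, w_mul_w_mul_comm 4 1, w_mul_w_mul_comm 3 2, w_mul_w_mul_comm 5 2,
    w_mul_w_comm 3 0, w_mul_w_comm 4 0, w_mul_w_comm 3 1, w_mul_w_comm 4 1, w_mul_w_comm 3 2,
    w_mul_w_comm 4 3, w_mul_w_comm 5 3, mul_neg, neg_neg, smul_neg, neg_smul, mul_zero, smul_zero]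
  module

theorem dp_db_w0_w4 (h : StructureEquations A G11 G12 G22 Dp Db) :
    Dp (Db (w 0 * w 4)) = ((A - conj A) * conj G12) • (w 0 * w 1 * w 3 * w 4)
      - (A - conj A) ^ 2 • (w 0 * w 2 * w 4 * w 5) := by
  simp only [h.dp_w_mul, h.db_w_mul, h.dp_w0, h.dp_w4, h.dp_w5, h.db_w0, h.db_w4, map_sub, map_smul,
    mul_assoc, add_mul, sub_mul, mul_add, mul_sub, smul_mul_assoc, mul_smul_comm]
  simp only [w_mul_w_mul_self, w_mul_self, w_mul_w_mul_comm 3 0, w_mul_w_mul_comm 4 0,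
    w_mul_w_mul_comm 3 1, w_mul_w_mul_comm 4 1, w_mul_w_mul_comm 4 2, w_mul_w_mul_comm 5 2,
    w_mul_w_comm 3 0, w_mul_w_comm 4 0, w_mul_w_comm 3 1, w_mul_w_comm 4 1, w_mul_w_comm 4 2,
    w_mul_w_comm 4 3, w_mul_w_comm 5 4, mul_neg, neg_neg, smul_neg, neg_smul, mul_zero, smul_zero]
  module

theorem dp_db_w0_w5 (h : StructureEquations A G11 G12 G22 Dp Db) :
    Dp (Db (w 0 * w 5)) = 0 := by
  simp only [h.dp_w_mul, h.db_w_mul, h.dp_w0, h.dp_w5, h.db_w0, h.db_w5, map_sub, map_smul,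
    map_zero, mul_assoc, add_mul, mul_add, mul_sub, smul_mul_assoc, mul_smul_comm, mul_zero]
  simp only [w_mul_w_mul_self, w_mul_self, w_mul_w_mul_comm 3 0, w_mul_w_mul_comm 4 0,
    w_mul_w_mul_comm 5 0, w_mul_w_mul_comm 3 1, w_mul_w_mul_comm 4 1, w_mul_w_mul_comm 5 1,
    w_mul_w_comm 3 0, w_mul_w_comm 4 0, w_mul_w_comm 3 1, w_mul_w_comm 4 1, w_mul_w_comm 5 3,
    w_mul_w_comm 5 4, mul_neg, neg_neg, smul_neg, mul_zero, smul_zero]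
  module

theorem dp_db_w1_w3 (h : StructureEquations A G11 G12 G22 Dp Db) :
    Dp (Db (w 1 * w 3)) = -((A - conj A) * G12) • (w 0 * w 1 * w 3 * w 4)
      - (A - conj A) ^ 2 • (w 1 * w 2 * w 3 * w 5) := by
  simp only [h.dp_w_mul, h.db_w_mul, h.dp_w1, h.dp_w3, h.dp_w5, h.db_w1, h.db_w3, map_sub, map_smul,
    mul_assoc, add_mul, sub_mul, mul_add, mul_sub, smul_mul_assoc, mul_smul_comm]
  simp only [w_mul_w_mul_self, w_mul_self, w_mul_w_mul_comm 1 0, w_mul_w_mul_comm 3 0,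
    w_mul_w_mul_comm 4 0, w_mul_w_mul_comm 3 1, w_mul_w_mul_comm 4 1, w_mul_w_mul_comm 3 2,
    w_mul_w_mul_comm 5 2, w_mul_w_comm 3 0, w_mul_w_comm 4 0, w_mul_w_comm 3 1, w_mul_w_comm 4 1,
    w_mul_w_comm 3 2, w_mul_w_comm 4 3, w_mul_w_comm 5 3, mul_neg, neg_neg, smul_neg, neg_smul,
    mul_zero, smul_zero]
  module

theorem dp_db_w1_w4 (h : StructureEquations A G11 G12 G22 Dp Db) :
    Dp (Db (w 1 * w 4)) = ((A + conj A) * G11) • (w 0 * w 1 * w 3 * w 4)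
      - (A + conj A) ^ 2 • (w 1 * w 2 * w 4 * w 5) := by
  simp only [h.dp_w_mul, h.db_w_mul, h.dp_w1, h.dp_w4, h.dp_w5, h.db_w1, h.db_w4, map_sub, map_smul,
    mul_assoc, add_mul, mul_add, mul_sub, smul_mul_assoc, mul_smul_comm]
  simp only [w_mul_w_mul_self, w_mul_self, w_mul_w_mul_comm 1 0, w_mul_w_mul_comm 3 0,
    w_mul_w_mul_comm 4 0, w_mul_w_mul_comm 3 1, w_mul_w_mul_comm 4 1, w_mul_w_mul_comm 4 2,
    w_mul_w_mul_comm 5 2, w_mul_w_comm 3 0, w_mul_w_comm 4 0, w_mul_w_comm 3 1, w_mul_w_comm 4 1,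
    w_mul_w_comm 4 2, w_mul_w_comm 4 3, w_mul_w_comm 5 4, mul_neg, neg_neg, smul_neg, neg_smul,
    mul_zero, smul_zero]
  module

theorem dp_db_w1_w5 (h : StructureEquations A G11 G12 G22 Dp Db) :
    Dp (Db (w 1 * w 5)) = 0 := by
  simp only [h.dp_w_mul, h.db_w_mul, h.dp_w1, h.dp_w5, h.db_w1, h.db_w5, map_sub, map_smul,
    map_zero, mul_assoc, add_mul, mul_add, mul_sub, smul_mul_assoc, mul_smul_comm, mul_zero]
  simp only [w_mul_w_mul_self, w_mul_self, w_mul_w_mul_comm 1 0, w_mul_w_mul_comm 3 0,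
    w_mul_w_mul_comm 4 0, w_mul_w_mul_comm 5 0, w_mul_w_mul_comm 3 1, w_mul_w_mul_comm 4 1,
    w_mul_w_mul_comm 5 1, w_mul_w_comm 3 0, w_mul_w_comm 4 0, w_mul_w_comm 3 1, w_mul_w_comm 4 1,
    w_mul_w_comm 5 3, w_mul_w_comm 5 4, mul_neg, neg_neg, smul_neg, neg_smul, mul_zero, smul_zero]
  module

theorem dp_db_w2_w3 (h : StructureEquations A G11 G12 G22 Dp Db) :
    Dp (Db (w 2 * w 3)) = -((A - conj A) * G12) • (w 0 * w 2 * w 3 * w 4)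
      + ((A + conj A) * G22) • (w 1 * w 2 * w 3 * w 4) := by
  simp only [h.dp_w_mul, h.db_w_mul, h.dp_w0, h.dp_w1, h.dp_w2, h.dp_w3, h.dp_w4, h.dp_w5, h.db_w2,
    h.db_w3, map_add, map_sub, map_smul, mul_assoc, add_mul, sub_mul, mul_add, mul_sub,
    smul_mul_assoc, mul_smul_comm, zero_mul]
  simp only [w_mul_w_mul_self, w_mul_self, w_mul_w_mul_comm 2 0, w_mul_w_mul_comm 3 0,
    w_mul_w_mul_comm 2 1, w_mul_w_mul_comm 3 1, w_mul_w_mul_comm 3 2, w_mul_w_mul_comm 4 2,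
    w_mul_w_comm 3 0, w_mul_w_comm 4 0, w_mul_w_comm 3 1, w_mul_w_comm 4 1, w_mul_w_comm 3 2,
    w_mul_w_comm 4 3, mul_neg, neg_neg, smul_neg, neg_smul, mul_zero, smul_zero]
  module

theorem dp_db_w2_w4 (h : StructureEquations A G11 G12 G22 Dp Db) :
    Dp (Db (w 2 * w 4)) = ((A + conj A) * G11) • (w 0 * w 2 * w 3 * w 4)
      - ((A - conj A) * conj G12) • (w 1 * w 2 * w 3 * w 4) := by
  simp only [h.dp_w_mul, h.db_w_mul, h.dp_w0, h.dp_w1, h.dp_w2, h.dp_w3, h.dp_w4, h.dp_w5, h.db_w2,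
    h.db_w4, map_add, map_sub, map_smul, mul_assoc, add_mul, sub_mul, mul_add, mul_sub,
    smul_mul_assoc, mul_smul_comm, zero_mul]
  simp only [w_mul_w_mul_self, w_mul_self, w_mul_w_mul_comm 2 0, w_mul_w_mul_comm 4 0,
    w_mul_w_mul_comm 2 1, w_mul_w_mul_comm 4 1, w_mul_w_mul_comm 3 2, w_mul_w_mul_comm 4 2,
    w_mul_w_comm 3 0, w_mul_w_comm 4 0, w_mul_w_comm 3 1, w_mul_w_comm 4 1, w_mul_w_comm 4 2,
    w_mul_w_comm 4 3, mul_neg, neg_neg, smul_neg, neg_smul, mul_zero, smul_zero]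
  module

theorem dp_db_w2_w5 (h : StructureEquations A G11 G12 G22 Dp Db) :
    Dp (Db (w 2 * w 5)) = (2 * (G11 * G22 - G12 * conj G12)) • (w 0 * w 1 * w 3 * w 4)
      + ((A + conj A) * G11) • (w 0 * w 2 * w 3 * w 5)
      + ((A - conj A) * G12) • (w 0 * w 2 * w 4 * w 5)
      - ((A - conj A) * conj G12) • (w 1 * w 2 * w 3 * w 5)
      - ((A + conj A) * G22) • (w 1 * w 2 * w 4 * w 5) := by
  simp only [h.dp_w_mul, h.db_w_mul, h.dp_w0, h.dp_w1, h.dp_w3, h.dp_w4, h.dp_w5, h.db_w2, h.db_w5,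
    map_add, map_sub, map_smul, map_zero, mul_assoc, add_mul, sub_mul, mul_add, mul_sub,
    smul_mul_assoc, mul_smul_comm, mul_zero]
  simp only [w_mul_w_mul_self, w_mul_self, w_mul_w_mul_comm 1 0, w_mul_w_mul_comm 3 0,
    w_mul_w_mul_comm 4 0, w_mul_w_mul_comm 3 1, w_mul_w_mul_comm 4 1, w_mul_w_mul_comm 3 2,
    w_mul_w_mul_comm 4 2, w_mul_w_comm 3 0, w_mul_w_comm 4 0, w_mul_w_comm 3 1, w_mul_w_comm 4 1,
    w_mul_w_comm 4 3, mul_neg, neg_neg, smul_neg, neg_smul, mul_zero, smul_zero]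
  module

end StructureEquations

theorem stmt10_general (A G12 : ℂ) (G11 G22 : ℝ)
    (hJ1 : (A + (starRingEnd ℂ) A) * G11 = 0)
    (hJ2 : (A + (starRingEnd ℂ) A) * G22 = 0)
    (hJ3 : (A - (starRingEnd ℂ) A) * G12 = 0)
    (Dp Db : Lambda →ₗ[ℂ] Lambda) (hDp : IsAntideriv Dp) (hDb : IsAntideriv Db)
    -- values of ∂ on the generators
    (hp0 : Dp (w 0) = A • (w 0 * w 2))
    (hp1 : Dp (w 1) = -A • (w 1 * w 2))
    (hp2 : Dp (w 2) = 0)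
    (hp3 : Dp (w 3) = (starRingEnd ℂ) A • (w 3 * w 2))
    (hp4 : Dp (w 4) = -(starRingEnd ℂ) A • (w 4 * w 2))
    (hp5 : Dp (w 5) = (G11 : ℂ) • (w 3 * w 0) + (starRingEnd ℂ) G12 • (w 3 * w 1) +
      G12 • (w 4 * w 0) + (G22 : ℂ) • (w 4 * w 1))
    -- values of ∂̄ on the generators
    (hb0 : Db (w 0) = A • (w 0 * w 5))
    (hb1 : Db (w 1) = -A • (w 1 * w 5))
    (hb2 : Db (w 2) = (G11 : ℂ) • (w 0 * w 3) + G12 • (w 0 * w 4) +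
      (starRingEnd ℂ) G12 • (w 1 * w 3) + (G22 : ℂ) • (w 1 * w 4))
    (hb3 : Db (w 3) = (starRingEnd ℂ) A • (w 3 * w 5))
    (hb4 : Db (w 4) = -(starRingEnd ℂ) A • (w 4 * w 5))
    (hb5 : Db (w 5) = 0)
    (r s t : ℝ) (u v z : ℂ) :
    Dp (Db (Fherm r s t u v z)) =
      (Complex.I * (t : ℂ) ^ 2 * ((G11 : ℂ) * G22 - (Complex.normSq G12 : ℂ))) •
        (w 0 * w 1 * w 3 * w 4)
      - (2 * Complex.I * (r : ℂ) ^ 2 * (A.re : ℂ) ^ 2) • (w 0 * w 2 * w 3 * w 5)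
      - (2 * Complex.I * (s : ℂ) ^ 2 * (A.re : ℂ) ^ 2) • (w 1 * w 2 * w 4 * w 5)
      + (2 * u * (A.im : ℂ) ^ 2) • (w 0 * w 2 * w 4 * w 5)
      - (2 * (starRingEnd ℂ) u * (A.im : ℂ) ^ 2) • (w 1 * w 2 * w 3 * w 5) := by
  have h : StructureEquations A G11 G12 G22 Dp Db :=
    ⟨hDp, hDb, hp0, hp1, hp2, hp3, hp4, hp5, hb0, hb1, hb2, hb3, hb4, hb5⟩
  have hJ4 : (A - conj A) * conj G12 = 0 := by
    rcases mul_eq_zero.1 hJ3 with hA | hG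
    · rw [hA, zero_mul]
    · rw [hG, map_zero, mul_zero]
  simp only [Fherm, map_smul, map_add, map_sub, h.dp_db_w0_w3, h.dp_db_w0_w4, h.dp_db_w0_w5,
    h.dp_db_w1_w3, h.dp_db_w1_w4, h.dp_db_w1_w5, h.dp_db_w2_w3, h.dp_db_w2_w4, h.dp_db_w2_w5, hJ1,
    hJ2, hJ3, hJ4, neg_zero, zero_smul, add_zero, sub_zero, zero_sub, smul_zero]
  rw [Complex.add_conj_sq, Complex.sub_conj_sq, Complex.mul_conj]
  module

/-- the formula for `∂∂̄F` on the Lie algebras with structure equations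
`dω¹ = Aω¹∧(ω³+ω̄³)`, `dω² = −Aω²∧(ω³+ω̄³)`,
`dω³ = G₁₁ω¹∧ω̄¹ + G₁₂ω¹∧ω̄² + Ḡ₁₂ω²∧ω̄¹ + G₂₂ω²∧ω̄²`, with `|A| = 1`. -/
theorem stmt10 (A G12 : ℂ) (G11 G22 : ℝ) (hA : ‖A‖ = 1)
    (hJ1 : (A + (starRingEnd ℂ) A) * G11 = 0)
    (hJ2 : (A + (starRingEnd ℂ) A) * G22 = 0)
    (hJ3 : (A - (starRingEnd ℂ) A) * G12 = 0)
    (Dp Db : Lambda →ₗ[ℂ] Lambda) (hDp : IsAntideriv Dp) (hDb : IsAntideriv Db)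
    -- values of ∂ on the generators
    (hp0 : Dp (w 0) = A • (w 0 * w 2))
    (hp1 : Dp (w 1) = -A • (w 1 * w 2))
    (hp2 : Dp (w 2) = 0)
    (hp3 : Dp (w 3) = (starRingEnd ℂ) A • (w 3 * w 2))
    (hp4 : Dp (w 4) = -(starRingEnd ℂ) A • (w 4 * w 2))
    (hp5 : Dp (w 5) = (G11 : ℂ) • (w 3 * w 0) + (starRingEnd ℂ) G12 • (w 3 * w 1) +
      G12 • (w 4 * w 0) + (G22 : ℂ) • (w 4 * w 1))
    -- values of ∂̄ on the generators
    (hb0 : Db (w 0) = A • (w 0 * w 5))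
    (hb1 : Db (w 1) = -A • (w 1 * w 5))
    (hb2 : Db (w 2) = (G11 : ℂ) • (w 0 * w 3) + G12 • (w 0 * w 4) +
      (starRingEnd ℂ) G12 • (w 1 * w 3) + (G22 : ℂ) • (w 1 * w 4))
    (hb3 : Db (w 3) = (starRingEnd ℂ) A • (w 3 * w 5))
    (hb4 : Db (w 4) = -(starRingEnd ℂ) A • (w 4 * w 5))
    (hb5 : Db (w 5) = 0)
    (r s t : ℝ) (u v z : ℂ) (hF : HermPos r s t u v z) :
    Dp (Db (Fherm r s t u v z)) =
      (Complex.I * (t : ℂ) ^ 2 * ((G11 : ℂ) * G22 - (Complex.normSq G12 : ℂ))) •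
        (w 0 * w 1 * w 3 * w 4)
      - (2 * Complex.I * (r : ℂ) ^ 2 * (A.re : ℂ) ^ 2) • (w 0 * w 2 * w 3 * w 5)
      - (2 * Complex.I * (s : ℂ) ^ 2 * (A.re : ℂ) ^ 2) • (w 1 * w 2 * w 4 * w 5)
      + (2 * u * (A.im : ℂ) ^ 2) • (w 0 * w 2 * w 4 * w 5)
      - (2 * (starRingEnd ℂ) u * (A.im : ℂ) ^ 2) • (w 1 * w 2 * w 3 * w 5) :=
  stmt10_general A G12 G11 G22 hJ1 hJ2 hJ3 Dp Db hDp hDb hp0 hp1 hp2 hp3 hp4 hp5 hb0 hb1 hb2 hb3 hb4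
    hb5 r s t u v z
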